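/- arXiv:1512.08265 — 10 statements merged into one kernel-verified Lean document; each statement's English description precedes it below -/
import Mathlib

section
/- Let A be an n×n real symmetric matrix, ρ ∈ {-1,1}, and let L = D(A) - ρA where D(A) is the diagonal matrix of row sums of A. If x is an eigenvector of L with eigenvalue μ and x_i = ρ x_j for some i ≠ j, then for any a ∈ ℝ, x is also an eigenvector with eigenvalue μ of the matrix D(A') - ρA', where A' is obtained from A by adding a to the (i,j) and (j,i) entries. -/
open Matrix

noncomputable def rsd {n : ℕ} (M : Matrix (Fin n) (Fin n) ℝ) : Matrix (Fin n) (Fin n) ℝ :=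
  Matrix.diagonal (fun i => ∑ j, M i j)

theorem stmt0 {n : ℕ} (A : Matrix (Fin n) (Fin n) ℝ) (hA : A.IsSymm)
    (ρ : ℝ) (hρ : ρ = -1 ∨ ρ = 1) (μ a : ℝ) (x : Fin n → ℝ) (hx : x ≠ 0)
    (heig : (rsd A - ρ • A).mulVec x = μ • x)
    (i j : Fin n) (hij : i ≠ j) (hxij : x i = ρ * x j)
    (A' : Matrix (Fin n) (Fin n) ℝ)
    (hA' : ∀ p q, A' p q = A p q + (if (p = i ∧ q = j) ∨ (p = j ∧ q = i) then a else 0)) :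
    (rsd A' - ρ • A').mulVec x = μ • x := by
  have hρ2 : ρ * ρ = 1 := by rcases hρ with h | h <;> simp [h]
  funext k
  have hk := congrFun heig k
  simp only [Matrix.mulVec, Matrix.sub_apply, Matrix.smul_apply, rsd,
    Matrix.diagonal_apply, dotProduct, Pi.smul_apply, smul_eq_mul] at hk ⊢
  have hE : ∀ p q, A' p q = A p q +
      (if p = i then (if q = j then a else 0)
        else if p = j then (if q = i then a else 0) else 0) := by
    intro p q
    rw [hA' p q]
    congr 1
    by_cases hpi : p = i <;> by_cases hpj : p = j <;>
      simp [hpi, hpj, hij, hij.symm] <;> try tauto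
  have hrow : ∀ p, (∑ q, A' p q) = (∑ q, A p q) +
      (if p = i then a else if p = j then a else 0) := by
    intro p
    simp only [hE, Finset.sum_add_distrib]
    congr 1
    by_cases hpi : p = i <;> by_cases hpj : p = j <;>
      simp [hpi, hpj, Finset.sum_ite_eq']
  have step : ∀ l, ((if k = l then ∑ q, A' k q else 0) - ρ * A' k l) * x l
      = ((if k = l then ∑ q, A k q else 0) - ρ * A k l) * x l
        + (((if k = l then (if k = i then a else if k = j then a else 0) else 0)
            - ρ * (if k = i then (if l = j then a else 0)
                    else if k = j then (if l = i then a else 0) else 0)) * x l) := by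
    intro l
    rw [hrow, hE]
    by_cases hkl : k = l <;> simp [hkl] <;> split_ifs <;> ring
  simp only [step, Finset.sum_add_distrib, hk]
  have hextra : (∑ l, (((if k = l then (if k = i then a else if k = j then a else 0) else 0)
            - ρ * (if k = i then (if l = j then a else 0)
                    else if k = j then (if l = i then a else 0) else 0)) * x l)) = 0 := by
    by_cases hki : k = i <;> by_cases hkj : k = j
    · exact absurd (hki ▸ hkj ▸ rfl : i = j) hij
    · subst hki
      have hx' : x k = ρ * x j := hxij
      simp only [hkj, if_true, if_false, ite_self, sub_mul, Finset.sum_sub_distrib,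
        ite_mul, zero_mul, mul_ite, mul_zero, Finset.sum_ite_eq, Finset.sum_ite_eq',
        Finset.mem_univ, if_true, hx']
      ring
    · subst hkj
      simp only [hki, if_true, if_false, ite_self, sub_mul, Finset.sum_sub_distrib,
        ite_mul, zero_mul, mul_ite, mul_zero, Finset.sum_ite_eq, Finset.sum_ite_eq',
        Finset.mem_univ, if_true, hxij]
      linear_combination (-(a * x k)) * hρ2
    · simp [hki, hkj]
  rw [hextra, add_zero]
end

section
/- Let G be a graph, μ a Laplacian eigenvalue of G afforded by eigenvector x, and suppose x_i = x_j for vertices i ≠ j. Then μ is a Laplacian eigenvalue of the graph G' obtained from G by deleting the edge {i,j} if it is present, or adding it if it is not, and x is a corresponding eigenvector of L(G'). -/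
open Matrix SimpleGraph

lemma lap_mulVec_sum {n : ℕ} (H : SimpleGraph (Fin n)) [DecidableRel H.Adj]
    (x : Fin n → ℝ) (p : Fin n) :
    (H.lapMatrix ℝ).mulVec x p = ∑ q, if H.Adj p q then x p - x q else 0 := by
  rw [show (H.lapMatrix ℝ).mulVec x p = (H.lapMatrix ℝ *ᵥ x) p from rfl,
    lapMatrix_mulVec_apply]
  have h1 : (H.degree p : ℝ) * x p = ∑ q ∈ H.neighborFinset p, x p := by
    rw [Finset.sum_const, nsmul_eq_mul, SimpleGraph.degree]
  rw [h1, ← Finset.sum_sub_distrib, neighborFinset_eq_filter, Finset.sum_filter]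

theorem stmt1 {n : ℕ} (G G' : SimpleGraph (Fin n))
    [DecidableRel G.Adj] [DecidableRel G'.Adj]
    (μ : ℝ) (x : Fin n → ℝ) (hx : x ≠ 0)
    (heig : (G.lapMatrix ℝ).mulVec x = μ • x)
    (i j : Fin n) (hij : i ≠ j) (hxij : x i = x j)
    (hG' : ∀ p q, G'.Adj p q ↔
      ((G.Adj p q ∧ ¬((p = i ∧ q = j) ∨ (p = j ∧ q = i))) ∨
       (¬G.Adj p q ∧ p ≠ q ∧ ((p = i ∧ q = j) ∨ (p = j ∧ q = i))))) :
    (G'.lapMatrix ℝ).mulVec x = μ • x := by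
  rw [← heig]
  funext p
  rw [lap_mulVec_sum, lap_mulVec_sum]
  apply Finset.sum_congr rfl
  intro q _
  have hpair : ((p = i ∧ q = j) ∨ (p = j ∧ q = i)) → x p - x q = 0 := by
    rintro (⟨rfl, rfl⟩ | ⟨rfl, rfl⟩)
    · rw [hxij]; ring
    · rw [hxij]; ring
  by_cases hA : G.Adj p q <;> by_cases hA' : G'.Adj p q <;>
    simp only [hA, hA', if_true, if_false]
  · have hpq : (p = i ∧ q = j) ∨ (p = j ∧ q = i) := by
      by_contra h
      exact hA' ((hG' p q).mpr (Or.inl ⟨hA, h⟩))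
    exact (hpair hpq).symm
  · rcases (hG' p q).mp hA' with ⟨h, _⟩ | ⟨_, _, hpq⟩
    · exact absurd h hA
    · exact hpair hpq
end

section
/- Let A be an n×n real symmetric matrix and λ an eigenvalue of A with multiplicity k. Then there exists a set U ⊆ {1,...,n} with |U| = k such that λ is not an eigenvalue of the principal submatrix of A obtained by deleting the rows and columns indexed by U. -/
/-!
Put `B = A - λ • 1`, a symmetric matrix of rank `n - k`. Choose rows of `B` indexed by `S` that
form a basis of its row space and take `U = Sᶜ`. Every row of `B` is a combination `C` of the rows
in `S`, so by symmetry `B[·, S] = C * B[S, S]`. If `B[S, S] v = 0`, then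
`vᵀ B[S, ·] = (B[·, S] v)ᵀ = (C B[S, S] v)ᵀ = 0`, and independence of the rows in `S` forces
`v = 0`; that is, `λ` is not an eigenvalue of `A[S, S]`.
-/

open Matrix

noncomputable def mult {m : Type*} [Fintype m] [DecidableEq m]
    (M : Matrix m m ℝ) (μ : ℝ) : ℕ :=
  Module.finrank ℝ (Module.End.eigenspace (Matrix.toLin' M) μ)

open Module Submodule Set

theorem exists_finset_linearIndependent_compl_span {K V m : Type*} [DivisionRing K]
    [AddCommGroup V] [Module K V] [Fintype m] (v : m → V) :
    ∃ U : Finset m, LinearIndependent K (fun i : {i // i ∉ U} ↦ v i) ∧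
      ∀ j, v j ∈ span K (range fun i : {i // i ∉ U} ↦ v i) := by
  classical
  obtain ⟨b, -, -, hspan, hind⟩ :=
    exists_linearIndepOn_extension (linearIndepOn_empty K v) (subset_univ ∅)
  refine ⟨bᶜ.toFinset, ?_, fun j ↦ ?_⟩
  · have hb : ∀ i, i ∉ bᶜ.toFinset ↔ i ∈ b := by simp
    exact (linearIndependent_equiv' (Equiv.subtypeEquivRight hb) rfl).mpr hind
  · have hrange : range (fun i : {i // i ∉ bᶜ.toFinset} ↦ v i) = v '' b := by ext; simp
    rw [hrange]
    exact hspan (mem_image_of_mem v (mem_univ j))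

theorem Matrix.rank_eq_card_of_linearIndependent_rows_of_mem_span {K m n ι : Type*} [Field K]
    [Fintype m] [Fintype n] [Fintype ι] {B : Matrix m n K} {e : ι → m}
    (hind : LinearIndependent K fun i ↦ B (e i))
    (hspan : ∀ j, B j ∈ span K (range fun i ↦ B (e i))) :
    B.rank = Fintype.card ι := by
  have hrows : span K (range fun i ↦ B (e i)) = span K (range B.row) :=
    le_antisymm (span_mono (range_comp_subset_range e B))
      (span_le.mpr (range_subset_iff.mpr hspan))
  rw [rank_eq_finrank_span_row, ← hrows, finrank_span_eq_card hind]

theorem Matrix.IsSymm.eq_zero_of_submatrix_mulVec_eq_zero {R m ι : Type*} [CommRing R]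
    [Fintype m] [Fintype ι] {B : Matrix m m R} (hB : B.IsSymm) {e : ι → m}
    (hind : LinearIndependent R fun i ↦ B (e i))
    (hspan : ∀ j, B j ∈ span R (range fun i ↦ B (e i)))
    {v : ι → R} (hv : B.submatrix e e *ᵥ v = 0) : v = 0 := by
  choose C hC using fun j ↦ (mem_span_range_iff_exists_fun R).mp (hspan j)
  have hfactor : B.submatrix id e = of C * B.submatrix e e := by
    ext j p
    simp [← hC j, Matrix.mul_apply, Finset.sum_apply]
  refine funext <| Fintype.linearIndependent_iff.mp hind v ?_
  calc ∑ i, v i • B (e i) = v ᵥ* B.submatrix e id := (vecMul_eq_sum _ _).symm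
    _ = B.submatrix id e *ᵥ v := by
        rw [← mulVec_transpose, transpose_submatrix, hB.eq]
    _ = 0 := by rw [hfactor, ← mulVec_mulVec, hv, mulVec_zero]

theorem mult_add_rank_sub_smul_one {m : Type*} [Fintype m] [DecidableEq m]
    (M : Matrix m m ℝ) (μ : ℝ) :
    mult M μ + (M - μ • 1).rank = Fintype.card m := by
  have h : toLin' M - μ • 1 = (M - μ • 1).mulVecLin := by
    rw [← toLin'_apply', map_sub, map_smul, toLin'_one]; rfl
  rw [mult, Module.End.eigenspace_def, h, add_comm, Matrix.rank, ← finrank_fintype_fun_eq_card ℝ,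
    LinearMap.finrank_range_add_finrank_ker]

theorem stmt2_general {n : ℕ} (A : Matrix (Fin n) (Fin n) ℝ) (hA : A.IsSymm)
    (lam : ℝ) (k : ℕ) (hk : mult A lam = k) :
    ∃ U : Finset (Fin n), U.card = k ∧
      ¬ ∃ v : {i : Fin n // i ∉ U} → ℝ, v ≠ 0 ∧
        (A.submatrix (fun p : {i : Fin n // i ∉ U} => p.1)
          (fun p : {i : Fin n // i ∉ U} => p.1)).mulVec v = lam • v := by
  obtain ⟨U, hind, hspan⟩ := exists_finset_linearIndependent_compl_span (K := ℝ) (A - lam • 1)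
  refine ⟨U, ?_, ?_⟩
  · have hrank := rank_eq_card_of_linearIndependent_rows_of_mem_span hind hspan
    have hsum := mult_add_rank_sub_smul_one A lam
    rw [Fintype.card_subtype_compl, Fintype.card_coe] at hrank
    have := U.card_le_univ
    omega
  · rintro ⟨v, hv, hveq⟩
    refine hv ((hA.sub (isSymm_one.smul lam)).eq_zero_of_submatrix_mulVec_eq_zero hind hspan ?_)
    have hsub : (A - lam • 1).submatrix Subtype.val Subtype.val =
        A.submatrix (fun p : {i // i ∉ U} => p.1) (fun p : {i // i ∉ U} => p.1) - lam • 1 := by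
      simp only [submatrix_sub, submatrix_smul, Pi.sub_apply, Pi.smul_apply,
        submatrix_one _ Subtype.val_injective]
    rw [hsub, sub_mulVec, smul_mulVec, one_mulVec, hveq, sub_self]

theorem stmt2 {n : ℕ} (A : Matrix (Fin n) (Fin n) ℝ) (hA : A.IsSymm)
    (lam : ℝ) (k : ℕ) (hk : mult A lam = k) (hlam : ∃ v : Fin n → ℝ, v ≠ 0 ∧ A.mulVec v = lam • v) :
    ∃ U : Finset (Fin n), U.card = k ∧
      ¬ ∃ v : {i : Fin n // i ∉ U} → ℝ, v ≠ 0 ∧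
        (A.submatrix (fun p : {i : Fin n // i ∉ U} => p.1)
          (fun p : {i : Fin n // i ∉ U} => p.1)).mulVec v = lam • v :=
  stmt2_general A hA lam k hk
end

section
/- Let A be an n×n real symmetric matrix, λ an eigenvalue of A with multiplicity k, and U a λ-star set of A (i.e., |U| = k and λ is not an eigenvalue of A with rows and columns in U deleted). Then there exists a basis {α_s : s ∈ U} of the λ-eigenspace of A such that for all s,t ∈ U, the t-th coordinate of α_s equals the Kronecker delta δ_{st}. -/
open Matrix

theorem stmt3 {n : ℕ} (A : Matrix (Fin n) (Fin n) ℝ) (hA : A.IsSymm)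
    (lam : ℝ) (k : ℕ) (hk : mult A lam = k)
    (U : Finset (Fin n)) (hUcard : U.card = k)
    (hstar : ¬ ∃ v : {i : Fin n // i ∉ U} → ℝ, v ≠ 0 ∧
        (A.submatrix (fun p : {i : Fin n // i ∉ U} => p.1)
          (fun p : {i : Fin n // i ∉ U} => p.1)).mulVec v = lam • v) :
    ∃ α : U → (Fin n → ℝ),
      (∀ s : U, A.mulVec (α s) = lam • (α s)) ∧
      LinearIndependent ℝ α ∧
      (∀ v : Fin n → ℝ, A.mulVec v = lam • v → v ∈ Submodule.span ℝ (Set.range α)) ∧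
      (∀ s t : U, α s t.1 = if s = t then 1 else 0) := by
  classical
  set E := Module.End.eigenspace (Matrix.toLin' A) lam with hE
  have hmemE : ∀ v : Fin n → ℝ, v ∈ E ↔ A.mulVec v = lam • v := by
    intro v
    rw [hE, Module.End.mem_eigenspace_iff, Matrix.toLin'_apply]
  let φ : E →ₗ[ℝ] (U → ℝ) :=
    { toFun := fun x s => (x : Fin n → ℝ) s.1
      map_add' := fun x y => rfl
      map_smul' := fun c x => rfl }
  have hφinj : Function.Injective φ := by
    rw [injective_iff_map_eq_zero]
    intro x hx
    have hU0 : ∀ j ∈ U, (x : Fin n → ℝ) j = 0 := fun j hj => congrFun hx ⟨j, hj⟩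
    set w : {i : Fin n // i ∉ U} → ℝ := fun p => (x : Fin n → ℝ) p.1 with hw
    have hAx : A.mulVec (x : Fin n → ℝ) = lam • (x : Fin n → ℝ) := (hmemE _).1 x.2
    have hweq : (A.submatrix (fun p : {i : Fin n // i ∉ U} => p.1)
          (fun p : {i : Fin n // i ∉ U} => p.1)).mulVec w = lam • w := by
      funext p
      have h1 : (A.submatrix (fun p : {i : Fin n // i ∉ U} => p.1)
          (fun p : {i : Fin n // i ∉ U} => p.1)).mulVec w p
          = ∑ q : {i : Fin n // i ∉ U}, A p.1 q.1 * (x : Fin n → ℝ) q.1 := by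
        simp [Matrix.mulVec, dotProduct, hw]
      have h2 : A.mulVec (x : Fin n → ℝ) p.1
          = ∑ j : Fin n, A p.1 j * (x : Fin n → ℝ) j := by
        simp [Matrix.mulVec, dotProduct]
      have h3 : ∑ j : Fin n, A p.1 j * (x : Fin n → ℝ) j
          = ∑ j ∈ Uᶜ, A p.1 j * (x : Fin n → ℝ) j := by
        refine (Finset.sum_subset (Finset.subset_univ Uᶜ) ?_).symm
        intro j _ hj
        have : j ∈ U := by simpa using hj
        simp [hU0 j this]
      have h4 : ∑ j ∈ Uᶜ, A p.1 j * (x : Fin n → ℝ) j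
          = ∑ q : {i : Fin n // i ∉ U}, A p.1 q.1 * (x : Fin n → ℝ) q.1 := by
        refine Finset.sum_subtype Uᶜ ?_ _
        intro j; simp
      have := congrFun hAx p.1
      rw [h1, ← h4, ← h3, ← h2, this]
      simp [hw]
    have hw0 : w = 0 := by
      by_contra hw0
      exact hstar ⟨w, hw0, hweq⟩
    ext j
    by_cases hj : j ∈ U
    · exact hU0 j hj
    · exact congrFun hw0 ⟨j, hj⟩
  have hdim : Module.finrank ℝ E = Module.finrank ℝ ({ x : Fin n // x ∈ U } → ℝ) := by
    have h1 : Module.finrank ℝ E = k := hk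
    have h2 : Module.finrank ℝ ({ x : Fin n // x ∈ U } → ℝ) = k := by
      simp [Module.finrank_fintype_fun_eq_card, hUcard]
    rw [h1, h2]
  have hφsurj : Function.Surjective φ :=
    (LinearMap.injective_iff_surjective_of_finrank_eq_finrank hdim).mp hφinj
  let e : E ≃ₗ[ℝ] (U → ℝ) := LinearEquiv.ofBijective φ ⟨hφinj, hφsurj⟩
  let α : U → (Fin n → ℝ) := fun s => ((e.symm (Pi.single s 1)) : Fin n → ℝ)
  have hcoord : ∀ s t : U, α s t.1 = if s = t then 1 else 0 := by
    intro s t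
    have : φ (e.symm (Pi.single s 1)) = Pi.single s 1 := e.apply_symm_apply _
    have h := congrFun this t
    simpa [α, φ, Pi.single_apply, eq_comm] using h
  have hmem : ∀ s : U, α s ∈ E := fun s => (e.symm (Pi.single s 1)).2
  have heig : ∀ s : U, A.mulVec (α s) = lam • (α s) := fun s => (hmemE _).1 (hmem s)
  have hrepr : ∀ v : Fin n → ℝ, A.mulVec v = lam • v → v = ∑ s : U, v s.1 • α s := by
    intro v hv
    have hvE : v ∈ E := (hmemE v).2 hv
    have hdE : v - ∑ s : U, v s.1 • α s ∈ E := by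
      exact Submodule.sub_mem E hvE (Submodule.sum_mem E fun s _ => Submodule.smul_mem E _ (hmem s))
    have hzero : φ ⟨_, hdE⟩ = 0 := by
      funext t
      have hsum : (∑ s : U, v s.1 • α s) t.1 = v t.1 := by
        rw [Finset.sum_apply]
        have : ∀ s : U, (v s.1 • α s) t.1 = v s.1 * (if s = t then 1 else 0) := by
          intro s; rw [Pi.smul_apply, hcoord s t]; simp
        simp only [this]
        simp
      show (v - ∑ s : U, v s.1 • α s) t.1 = 0
      rw [Pi.sub_apply, hsum, sub_self]
    have := (injective_iff_map_eq_zero φ).mp hφinj _ hzero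
    have h0 : v - ∑ s : U, v s.1 • α s = 0 := by
      simpa using congrArg Subtype.val this
    exact sub_eq_zero.mp h0
  refine ⟨α, heig, ?_, ?_, hcoord⟩
  · rw [Fintype.linearIndependent_iff]
    intro g hg t
    have h := congrFun hg t.1
    rw [Finset.sum_apply] at h
    have hterm : ∀ s : U, (g s • α s) t.1 = g s * (if s = t then 1 else 0) := by
      intro s; rw [Pi.smul_apply, hcoord s t]; simp
    simp only [hterm] at h
    simpa using h
  · intro v hv
    rw [hrepr v hv]
    exact Submodule.sum_mem _ fun s _ => Submodule.smul_mem _ _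
      (Submodule.subset_span ⟨s, rfl⟩)
end

section
/- Let G be a graph with a simple Laplacian eigenvalue μ (multiplicity 1), and let u be a vertex of G such that some μ-eigenvector of L(G) is nonzero at u. Let H be any graph disjoint from G, and let G' be the graph formed from the disjoint union of G and H by joining u to an arbitrary vertex of H. Then the multiplicity of μ as a Laplacian eigenvalue of G' equals its multiplicity as a Laplacian eigenvalue of H. -/
/-!
Restrict a `μ`-eigenvector `v` of `L(G')` to the two sides: on `G` it satisfies
`L(G) v_G + (v_u - v_w) e_u = μ v_G`, and symmetrically on `H`. Pairing this with the eigenvector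
`x` and using the symmetry of `L(G)` gives `(v_u - v_w) x_u = 0`, so the bridge term vanishes and
the `μ`-eigenvectors of `L(G')` are exactly the pairs of `μ`-eigenvectors of `L(G)` and `L(H)`
agreeing across the bridge. As `μ` is simple for `L(G)` and `x_u ≠ 0`, the `G`-part is
`(v_w / x_u) x`, so restriction to `H` is an isomorphism of eigenspaces.
-/

open Matrix SimpleGraph

open Module Module.End

variable {V W : Type*}

section

variable [Fintype V] [DecidableEq V]

theorem SimpleGraph.lapMatrix_mulVec_apply_eq_sum {R : Type*} [NonAssocRing R]
    (G : SimpleGraph V) [DecidableRel G.Adj] (x : V → R) (v : V) :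
    (G.lapMatrix R *ᵥ x) v = ∑ j, if G.Adj v j then x v - x j else 0 := by
  rw [lapMatrix_mulVec_apply, neighborFinset_eq_filter, ← Finset.sum_filter,
    Finset.sum_sub_distrib, Finset.sum_const, ← neighborFinset_eq_filter, degree, nsmul_eq_mul]

theorem Matrix.mem_eigenspace_toLin'_iff {K : Type*} [Field K] {M : Matrix V V K} {μ : K}
    {x : V → K} : x ∈ eigenspace (toLin' M) μ ↔ M *ᵥ x = μ • x := by
  rw [mem_eigenspace_iff, toLin'_apply]

theorem Matrix.IsSymm.eq_zero_of_mulVec_add_single_eq_smul {R : Type*} [CommRing R]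
    [NoZeroDivisors R] {M : Matrix V V R} (hM : M.IsSymm) {x y : V → R} {μ c : R} {u : V}
    (hx : M *ᵥ x = μ • x) (hxu : x u ≠ 0) (hy : M *ᵥ y + Pi.single u c = μ • y) : c = 0 := by
  have hsymm : x ⬝ᵥ (M *ᵥ y) = μ * (x ⬝ᵥ y) := by
    rw [dotProduct_mulVec, ← mulVec_transpose, hM.eq, hx, smul_dotProduct, smul_eq_mul]
  have := congrArg (x ⬝ᵥ ·) hy
  simp only [dotProduct_add, dotProduct_single, dotProduct_smul, smul_eq_mul, hsymm,
    add_eq_left] at this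
  exact (mul_eq_zero.mp this).resolve_left hxu

theorem Matrix.eq_zero_of_finrank_eigenspace_eq_one {K : Type*} [Field K] {M : Matrix V V K}
    {μ : K} (hμ : finrank K (eigenspace (toLin' M) μ) = 1) {x y : V → K} {u : V}
    (hx : M *ᵥ x = μ • x) (hxu : x u ≠ 0) (hy : M *ᵥ y = μ • y) (hyu : y u = 0) : y = 0 := by
  have hx0 : (⟨x, mem_eigenspace_toLin'_iff.mpr hx⟩ : eigenspace (toLin' M) μ) ≠ 0 :=
    fun h ↦ hxu (congrFun (congrArg Subtype.val h) u)
  obtain ⟨c, hc⟩ :=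
    (finrank_eq_one_iff_of_nonzero' _ hx0).mp hμ ⟨y, mem_eigenspace_toLin'_iff.mpr hy⟩
  have hc : c • x = y := congrArg Subtype.val hc
  have : c = 0 := by simpa [← hc, hxu] using hyu
  rw [← hc, this, zero_smul]

end

namespace SimpleGraph

variable (G : SimpleGraph V) (H : SimpleGraph W) (u : V) (w : W) (G' : SimpleGraph (V ⊕ W))

def IsBridgeJoin : Prop :=
  ∀ p q : V ⊕ W, G'.Adj p q ↔
    (∃ a b, p = Sum.inl a ∧ q = Sum.inl b ∧ G.Adj a b) ∨
    (∃ a b, p = Sum.inr a ∧ q = Sum.inr b ∧ H.Adj a b) ∨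
    (p = Sum.inl u ∧ q = Sum.inr w) ∨ (p = Sum.inr w ∧ q = Sum.inl u)

variable {G H u w G'}

namespace IsBridgeJoin

theorem adj_inl_inl (hG' : IsBridgeJoin G H u w G') {a b : V} :
    G'.Adj (.inl a) (.inl b) ↔ G.Adj a b := (hG' _ _).trans (by simp)

theorem adj_inl_inr (hG' : IsBridgeJoin G H u w G') {a : V} {b : W} :
    G'.Adj (.inl a) (.inr b) ↔ a = u ∧ b = w := (hG' _ _).trans (by simp)

theorem adj_inr_inr (hG' : IsBridgeJoin G H u w G') {a b : W} :
    G'.Adj (.inr a) (.inr b) ↔ H.Adj a b := (hG' _ _).trans (by simp)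

theorem adj_inr_inl (hG' : IsBridgeJoin G H u w G') {a : W} {b : V} :
    G'.Adj (.inr a) (.inl b) ↔ a = w ∧ b = u := (hG' _ _).trans (by simp)

variable [Fintype V] [Fintype W] [DecidableEq V] [DecidableEq W] [DecidableRel G'.Adj]

theorem lapMatrix_mulVec_comp_inl {R : Type*} [NonAssocRing R] [DecidableRel G.Adj]
    (hG' : IsBridgeJoin G H u w G') (v : V ⊕ W → R) :
    (G'.lapMatrix R *ᵥ v) ∘ Sum.inl =
      G.lapMatrix R *ᵥ (v ∘ Sum.inl) + Pi.single u (v (.inl u) - v (.inr w)) := by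
  funext a
  simp only [Function.comp_apply, lapMatrix_mulVec_apply_eq_sum, Fintype.sum_sum_type,
    hG'.adj_inl_inl, hG'.adj_inl_inr, Pi.add_apply]
  by_cases h : a = u
  · subst h; simp
  · simp [h]

theorem lapMatrix_mulVec_comp_inr {R : Type*} [NonAssocRing R] [DecidableRel H.Adj]
    (hG' : IsBridgeJoin G H u w G') (v : V ⊕ W → R) :
    (G'.lapMatrix R *ᵥ v) ∘ Sum.inr =
      H.lapMatrix R *ᵥ (v ∘ Sum.inr) + Pi.single w (v (.inr w) - v (.inl u)) := by
  funext b
  simp only [Function.comp_apply, lapMatrix_mulVec_apply_eq_sum, Fintype.sum_sum_type,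
    hG'.adj_inr_inr, hG'.adj_inr_inl, Pi.add_apply]
  by_cases h : b = w
  · subst h; simp [add_comm]
  · simp [h]

theorem lapMatrix_mulVec_eq_smul_iff {R : Type*} [CommRing R] [NoZeroDivisors R]
    [DecidableRel G.Adj] [DecidableRel H.Adj] (hG' : IsBridgeJoin G H u w G') {μ : R}
    {x : V → R} (hx : G.lapMatrix R *ᵥ x = μ • x) (hxu : x u ≠ 0) (v : V ⊕ W → R) :
    G'.lapMatrix R *ᵥ v = μ • v ↔
      G.lapMatrix R *ᵥ (v ∘ Sum.inl) = μ • (v ∘ Sum.inl) ∧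
      H.lapMatrix R *ᵥ (v ∘ Sum.inr) = μ • (v ∘ Sum.inr) ∧ v (.inl u) = v (.inr w) := by
  have hinl := hG'.lapMatrix_mulVec_comp_inl (R := R) v
  have hinr := hG'.lapMatrix_mulVec_comp_inr (R := R) v
  constructor
  · intro hv
    rw [hv] at hinl hinr
    have hbridge : v (.inl u) - v (.inr w) = 0 :=
      (isSymm_lapMatrix R G).eq_zero_of_mulVec_add_single_eq_smul hx hxu hinl.symm
    rw [hbridge, Pi.single_zero, add_zero] at hinl
    rw [← neg_sub, hbridge, neg_zero, Pi.single_zero, add_zero] at hinr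
    exact ⟨hinl.symm, hinr.symm, sub_eq_zero.mp hbridge⟩
  · rintro ⟨hl, hr, hbridge⟩
    rw [hbridge, sub_self, Pi.single_zero, add_zero, hl] at hinl
    rw [hbridge, sub_self, Pi.single_zero, add_zero, hr] at hinr
    funext p
    rcases p with a | b
    · exact congrFun hinl a
    · exact congrFun hinr b

theorem finrank_eigenspace_lapMatrix {K : Type*} [Field K] [DecidableRel G.Adj]
    [DecidableRel H.Adj] (hG' : IsBridgeJoin G H u w G')
    {μ : K} (hμ : finrank K (eigenspace (toLin' (G.lapMatrix K)) μ) = 1) {x : V → K}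
    (hx : G.lapMatrix K *ᵥ x = μ • x) (hxu : x u ≠ 0) :
    finrank K (eigenspace (toLin' (G'.lapMatrix K)) μ) =
      finrank K (eigenspace (toLin' (H.lapMatrix K)) μ) := by
  have hchar := hG'.lapMatrix_mulVec_eq_smul_iff hx hxu
  let restrict :
      eigenspace (toLin' (G'.lapMatrix K)) μ →ₗ[K] eigenspace (toLin' (H.lapMatrix K)) μ :=
    LinearMap.codRestrict _ ((LinearMap.funLeft K K Sum.inr).comp (Submodule.subtype _))
      fun v ↦ mem_eigenspace_toLin'_iff.mpr ((hchar v).mp (mem_eigenspace_toLin'_iff.mp v.2)).2.1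
  refine LinearEquiv.finrank_eq (LinearEquiv.ofBijective restrict ⟨?_, ?_⟩)
  · rw [← LinearMap.ker_eq_bot, LinearMap.ker_eq_bot']
    rintro ⟨v, hv⟩ hv0
    have hr : v ∘ Sum.inr = 0 := congrArg Subtype.val hv0
    obtain ⟨hl, -, hbridge⟩ := (hchar v).mp (mem_eigenspace_toLin'_iff.mp hv)
    have hl0 : v ∘ Sum.inl = 0 :=
      eq_zero_of_finrank_eigenspace_eq_one hμ hx hxu hl (hbridge.trans (congrFun hr w))
    ext (a | b)
    · exact congrFun hl0 a
    · exact congrFun hr b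
  · rintro ⟨z, hz⟩
    have hz' := mem_eigenspace_toLin'_iff.mp hz
    have hscale : z w / x u * x u = z w := div_mul_cancel₀ _ hxu
    refine ⟨⟨Sum.elim ((z w / x u) • x) z, mem_eigenspace_toLin'_iff.mpr ((hchar _).mpr
      ⟨?_, hz', by simpa using hscale⟩)⟩, rfl⟩
    rw [Sum.elim_comp_inl, mulVec_smul, hx, smul_comm]

end IsBridgeJoin

end SimpleGraph

theorem stmt4_general {n m : ℕ} (G : SimpleGraph (Fin n)) (H : SimpleGraph (Fin m))
    [DecidableRel G.Adj] [DecidableRel H.Adj]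
    (μ : ℝ) (hsimple : mult (G.lapMatrix ℝ) μ = 1)
    (u : Fin n) (x : Fin n → ℝ)
    (hxe : (G.lapMatrix ℝ).mulVec x = μ • x) (hxu : x u ≠ 0)
    (w : Fin m)
    (G' : SimpleGraph (Fin n ⊕ Fin m)) [DecidableRel G'.Adj]
    (hG' : ∀ p q : Fin n ⊕ Fin m, G'.Adj p q ↔
      (∃ a b, p = Sum.inl a ∧ q = Sum.inl b ∧ G.Adj a b) ∨
      (∃ a b, p = Sum.inr a ∧ q = Sum.inr b ∧ H.Adj a b) ∨
      (p = Sum.inl u ∧ q = Sum.inr w) ∨ (p = Sum.inr w ∧ q = Sum.inl u)) :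
    mult (G'.lapMatrix ℝ) μ = mult (H.lapMatrix ℝ) μ :=
  IsBridgeJoin.finrank_eigenspace_lapMatrix hG' hsimple hxe hxu

theorem stmt4 {n m : ℕ} (G : SimpleGraph (Fin n)) (H : SimpleGraph (Fin m))
    [DecidableRel G.Adj] [DecidableRel H.Adj]
    (μ : ℝ) (hsimple : mult (G.lapMatrix ℝ) μ = 1)
    (u : Fin n) (x : Fin n → ℝ) (hx : x ≠ 0)
    (hxe : (G.lapMatrix ℝ).mulVec x = μ • x) (hxu : x u ≠ 0)
    (w : Fin m)
    (G' : SimpleGraph (Fin n ⊕ Fin m)) [DecidableRel G'.Adj]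
    (hG' : ∀ p q : Fin n ⊕ Fin m, G'.Adj p q ↔
      (∃ a b, p = Sum.inl a ∧ q = Sum.inl b ∧ G.Adj a b) ∨
      (∃ a b, p = Sum.inr a ∧ q = Sum.inr b ∧ H.Adj a b) ∨
      (p = Sum.inl u ∧ q = Sum.inr w) ∨ (p = Sum.inr w ∧ q = Sum.inl u)) :
    mult (G'.lapMatrix ℝ) μ = mult (H.lapMatrix ℝ) μ :=
  stmt4_general G H μ hsimple u x hxe hxu w G' hG'
end

section
/- Let G' be the graph obtained from a graph G by attaching a path on 3 vertices to G via a new edge from one end-vertex of the path to an arbitrary vertex of G. Then the multiplicity of 1 as a Laplacian eigenvalue of G' equals the multiplicity of 1 as a Laplacian eigenvalue of G. -/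
open Matrix SimpleGraph Finset

lemma lap_mulVec {V : Type*} [Fintype V] [DecidableEq V] (G : SimpleGraph V) [DecidableRel G.Adj]
    (x : V → ℝ) (i : V) :
    (G.lapMatrix ℝ *ᵥ x) i = ∑ j, if G.Adj i j then x i - x j else 0 := by
  rw [SimpleGraph.lapMatrix_mulVec_apply, Finset.sum_ite, Finset.sum_const_zero, add_zero,
    Finset.sum_sub_distrib, Finset.sum_const]
  have h : Finset.univ.filter (fun j => G.Adj i j) = G.neighborFinset i := by
    ext j; simp
  rw [h, SimpleGraph.degree]; ring

lemma mem_eig_iff {m : Type*} [Fintype m] [DecidableEq m] (M : Matrix m m ℝ) (x : m → ℝ) :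
    x ∈ Module.End.eigenspace (Matrix.toLin' M) 1 ↔ ∀ i, (M *ᵥ x) i = x i := by
  rw [Module.End.mem_eigenspace_iff, one_smul]
  constructor
  · intro h i; rw [← Matrix.toLin'_apply, h]
  · intro h; rw [Matrix.toLin'_apply]; funext i; exact h i

noncomputable def extMap (n : ℕ) (v : Fin n) :
    (Fin n → ℝ) →ₗ[ℝ] ((Fin n ⊕ Fin 3) → ℝ) where
  toFun y := Sum.elim y (fun j => if j = 0 then y v else if j = 1 then 0 else -(y v))
  map_add' := by
    intro y z; funext p; rcases p with a | j
    · simp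
    · simp only [Sum.elim_inr, Pi.add_apply]; split_ifs <;> ring
  map_smul' := by
    intro c y; funext p; rcases p with a | j
    · simp
    · simp only [Sum.elim_inr, Pi.smul_apply, RingHom.id_apply, smul_eq_mul]
      split_ifs <;> ring

/-- Attaching a path on 3 vertices (edges 0-1 and 1-2 in the `Fin 3` part) to a graph `G`
by a new edge from the end-vertex `0` of the path to an arbitrary vertex `v` of `G`
does not change the multiplicity of the Laplacian eigenvalue `1`. -/
theorem stmt5 {n : ℕ} (G : SimpleGraph (Fin n)) [DecidableRel G.Adj]
    (v : Fin n)
    (G' : SimpleGraph (Fin n ⊕ Fin 3)) [DecidableRel G'.Adj]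
    (hG' : ∀ p q : Fin n ⊕ Fin 3, G'.Adj p q ↔
      (∃ a b, p = Sum.inl a ∧ q = Sum.inl b ∧ G.Adj a b) ∨
      (∃ a b : Fin 3, p = Sum.inr a ∧ q = Sum.inr b ∧ ((a:ℕ) + 1 = b ∨ (b:ℕ) + 1 = a)) ∨
      (p = Sum.inl v ∧ q = Sum.inr 0) ∨ (p = Sum.inr 0 ∧ q = Sum.inl v)) :
    mult (G'.lapMatrix ℝ) 1 = mult (G.lapMatrix ℝ) 1 := by
  classical
  have hA1 : ∀ a b, G'.Adj (Sum.inl a) (Sum.inl b) ↔ G.Adj a b := by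
    intro a b; rw [hG']; simp
  have hA2 : ∀ a (b : Fin 3), G'.Adj (Sum.inl a) (Sum.inr b) ↔ (a = v ∧ b = 0) := by
    intro a b; rw [hG']; simp
  have hA3 : ∀ (a : Fin 3) b, G'.Adj (Sum.inr a) (Sum.inl b) ↔ (a = 0 ∧ b = v) := by
    intro a b; rw [hG']; simp
  have hA4 : ∀ (a b : Fin 3), G'.Adj (Sum.inr a) (Sum.inr b) ↔ ((a:ℕ) + 1 = b ∨ (b:ℕ) + 1 = a) := by
    intro a b; rw [hG']; simp
  -- mulVec computations
  have e_inl : ∀ (x : (Fin n ⊕ Fin 3) → ℝ) a, (G'.lapMatrix ℝ *ᵥ x) (Sum.inl a) =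
      (G.lapMatrix ℝ *ᵥ (x ∘ Sum.inl)) a
        + (if a = v then x (Sum.inl a) - x (Sum.inr 0) else 0) := by
    intro x a
    rw [lap_mulVec, lap_mulVec, Fintype.sum_sum_type]
    congr 1
    · simp [hA1]
    · rw [Fin.sum_univ_three]
      simp [hA2]
  have e_inr0 : ∀ (x : (Fin n ⊕ Fin 3) → ℝ), (G'.lapMatrix ℝ *ᵥ x) (Sum.inr 0) =
      (x (Sum.inr 0) - x (Sum.inl v)) + (x (Sum.inr 0) - x (Sum.inr 1)) := by
    intro x
    rw [lap_mulVec, Fintype.sum_sum_type, Fin.sum_univ_three]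
    simp [hA3, hA4]
  have e_inr1 : ∀ (x : (Fin n ⊕ Fin 3) → ℝ), (G'.lapMatrix ℝ *ᵥ x) (Sum.inr 1) =
      (x (Sum.inr 1) - x (Sum.inr 0)) + (x (Sum.inr 1) - x (Sum.inr 2)) := by
    intro x
    rw [lap_mulVec, Fintype.sum_sum_type, Fin.sum_univ_three]
    simp [hA3, hA4]
  have e_inr2 : ∀ (x : (Fin n ⊕ Fin 3) → ℝ), (G'.lapMatrix ℝ *ᵥ x) (Sum.inr 2) =
      x (Sum.inr 2) - x (Sum.inr 1) := by
    intro x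
    rw [lap_mulVec, Fintype.sum_sum_type, Fin.sum_univ_three]
    simp [hA3, hA4]
  have key : ∀ x : (Fin n ⊕ Fin 3) → ℝ,
      x ∈ Module.End.eigenspace (Matrix.toLin' (G'.lapMatrix ℝ)) 1 ↔
      ((x ∘ Sum.inl) ∈ Module.End.eigenspace (Matrix.toLin' (G.lapMatrix ℝ)) 1 ∧
        x (Sum.inr 0) = x (Sum.inl v) ∧ x (Sum.inr 1) = 0 ∧
        x (Sum.inr 2) = -(x (Sum.inl v))) := by
    intro x
    rw [mem_eig_iff, mem_eig_iff]
    constructor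
    · intro h
      have h2 := h (Sum.inr 2); rw [e_inr2] at h2
      have h1 := h (Sum.inr 1); rw [e_inr1] at h1
      have h0 := h (Sum.inr 0); rw [e_inr0] at h0
      have hb : x (Sum.inr 1) = 0 := by linarith
      have h0v : x (Sum.inr 0) = x (Sum.inl v) := by linarith
      refine ⟨?_, h0v, hb, by linarith⟩
      intro a
      have ha := h (Sum.inl a); rw [e_inl] at ha
      have hz : (if a = v then x (Sum.inl a) - x (Sum.inr 0) else 0) = 0 := by
        split_ifs with hav
        · subst hav; rw [h0v]; ring
        · rfl
      rw [hz, add_zero] at ha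
      exact ha
    · rintro ⟨hGm, h0, h1, h2⟩ p
      rcases p with a | j
      · rw [e_inl]
        have hz : (if a = v then x (Sum.inl a) - x (Sum.inr 0) else 0) = 0 := by
          split_ifs with hav
          · subst hav; rw [h0]; ring
          · rfl
        rw [hz, add_zero]; exact hGm a
      · fin_cases j
        · show (G'.lapMatrix ℝ *ᵥ x) (Sum.inr 0) = x (Sum.inr 0)
          rw [e_inr0, h0, h1]; ring
        · show (G'.lapMatrix ℝ *ᵥ x) (Sum.inr 1) = x (Sum.inr 1)
          rw [e_inr1, h0, h1, h2]; ring
        · show (G'.lapMatrix ℝ *ᵥ x) (Sum.inr 2) = x (Sum.inr 2)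
          rw [e_inr2, h1, h2]; ring
  set W' := Module.End.eigenspace (Matrix.toLin' (G'.lapMatrix ℝ)) 1 with hW'def
  set W := Module.End.eigenspace (Matrix.toLin' (G.lapMatrix ℝ)) 1 with hWdef
  let F : ((Fin n ⊕ Fin 3) → ℝ) →ₗ[ℝ] (Fin n → ℝ) := LinearMap.funLeft ℝ ℝ Sum.inl
  have hEmem : ∀ y ∈ W, extMap n v y ∈ W' := by
    intro y hy
    rw [key]
    refine ⟨?_, ?_, ?_, ?_⟩
    · have hc : (extMap n v y) ∘ Sum.inl = y := rfl
      rw [hc]; exact hy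
    · rfl
    · rfl
    · rfl
  have hFmem : ∀ x ∈ W', (x ∘ Sum.inl) ∈ W := fun x hx => ((key x).mp hx).1
  let f : W' →ₗ[ℝ] W := LinearMap.codRestrict W (F.comp W'.subtype) (fun x => hFmem x x.2)
  let g : W →ₗ[ℝ] W' :=
    LinearMap.codRestrict W' ((extMap n v).comp W.subtype) (fun y => hEmem y y.2)
  have h1 : f.comp g = LinearMap.id := by
    apply LinearMap.ext; intro y
    apply Subtype.ext
    rfl
  have h2 : g.comp f = LinearMap.id := by
    apply LinearMap.ext; intro x
    apply Subtype.ext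
    obtain ⟨hxG, h0, hb, h2'⟩ := (key x).mp x.2
    funext p
    rcases p with a | j
    · rfl
    · show (if j = 0 then (x : (Fin n ⊕ Fin 3) → ℝ) (Sum.inl v)
          else if j = 1 then 0 else -((x : (Fin n ⊕ Fin 3) → ℝ) (Sum.inl v)))
        = (x : (Fin n ⊕ Fin 3) → ℝ) (Sum.inr j)
      fin_cases j
      · exact h0.symm
      · exact hb.symm
      · exact h2'.symm
  exact LinearEquiv.finrank_eq (LinearEquiv.ofLinear f g h1 h2)
end

section
/- Let G be a nonempty graph and let H = G # S_k be a connected sum of G with the star graph S_k on k > 1 vertices (i.e., H is obtained by adding a single edge between some vertex of G and some vertex of S_k). Then the multiplicity of k as a Laplacian eigenvalue of H equals the multiplicity of k as a Laplacian eigenvalue of G. -/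
open Matrix SimpleGraph

lemma lap_mulVec_sum_s6 {V : Type*} [Fintype V] [DecidableEq V] (G' : SimpleGraph V)
    [DecidableRel G'.Adj] (x : V → ℝ) (i : V) :
    (G'.lapMatrix ℝ *ᵥ x) i = ∑ j, if G'.Adj i j then x i - x j else 0 := by
  rw [SimpleGraph.lapMatrix_mulVec_apply]
  have h1 : (G'.degree i : ℝ) * x i = ∑ _u ∈ G'.neighborFinset i, x i := by
    rw [Finset.sum_const, SimpleGraph.degree, nsmul_eq_mul]
  rw [h1, ← Finset.sum_sub_distrib, SimpleGraph.neighborFinset_eq_filter, Finset.sum_filter]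

/-- Connected sum with the star `S_k` on `k` vertices (center `0` adjacent to all other
vertices of the `Fin k` part), joined by a single edge between a vertex `v` of `G` and a
vertex `w` of `S_k`, does not change the multiplicity of the Laplacian eigenvalue `k`. -/
theorem stmt6 {n k : ℕ} (hk : 1 < k)
    (G : SimpleGraph (Fin n)) [DecidableRel G.Adj] (hGne : G.edgeSet.Nonempty)
    (v : Fin n) (w : Fin k)
    (H : SimpleGraph (Fin n ⊕ Fin k)) [DecidableRel H.Adj]
    (hH : ∀ p q : Fin n ⊕ Fin k, H.Adj p q ↔
      (∃ a b, p = Sum.inl a ∧ q = Sum.inl b ∧ G.Adj a b) ∨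
      (∃ a b : Fin k, p = Sum.inr a ∧ q = Sum.inr b ∧ a ≠ b ∧ ((a:ℕ) = 0 ∨ (b:ℕ) = 0)) ∨
      (p = Sum.inl v ∧ q = Sum.inr w) ∨ (p = Sum.inr w ∧ q = Sum.inl v)) :
    mult (H.lapMatrix ℝ) (k : ℝ) = mult (G.lapMatrix ℝ) (k : ℝ) := by
  classical
  have hk0 : 0 < k := by omega
  set c : Fin k := ⟨0, hk0⟩ with hcdef
  have hk2 : (2:ℝ) ≤ (k:ℝ) := by exact_mod_cast hk
  have ht : (1 - (k:ℝ)) ≠ 0 := by linarith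
  have hk1 : ((k:ℝ) - 1) ≠ 0 := by linarith
  -- adjacency characterizations
  have hval : ∀ b : Fin k, (b:ℕ) = 0 ↔ b = c := by
    intro b; rw [Fin.ext_iff]
  have hll : ∀ a b : Fin n, H.Adj (Sum.inl a) (Sum.inl b) ↔ G.Adj a b := by
    intro a b; rw [hH]
    constructor
    · rintro (⟨a1,b1,h1,h2,h3⟩|⟨a1,b1,h1,h2,h3⟩|⟨h1,h2⟩|⟨h1,h2⟩) <;> simp_all
    · intro h; exact Or.inl ⟨a, b, rfl, rfl, h⟩
  have hlr : ∀ (a : Fin n) (b : Fin k), H.Adj (Sum.inl a) (Sum.inr b) ↔ a = v ∧ b = w := by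
    intro a b; rw [hH]
    constructor
    · rintro (⟨a1,b1,h1,h2,h3⟩|⟨a1,b1,h1,h2,h3⟩|⟨h1,h2⟩|⟨h1,h2⟩) <;> simp_all
    · rintro ⟨rfl, rfl⟩; exact Or.inr (Or.inr (Or.inl ⟨rfl, rfl⟩))
  have hrl : ∀ (b : Fin k) (a : Fin n), H.Adj (Sum.inr b) (Sum.inl a) ↔ b = w ∧ a = v := by
    intro b a; rw [hH]
    constructor
    · rintro (⟨a1,b1,h1,h2,h3⟩|⟨a1,b1,h1,h2,h3⟩|⟨h1,h2⟩|⟨h1,h2⟩) <;> simp_all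
    · rintro ⟨rfl, rfl⟩; exact Or.inr (Or.inr (Or.inr ⟨rfl, rfl⟩))
  have hrr : ∀ b b' : Fin k, H.Adj (Sum.inr b) (Sum.inr b') ↔ b ≠ b' ∧ (b = c ∨ b' = c) := by
    intro b b'; rw [hH]
    constructor
    · rintro (⟨a1,b1,h1,h2,h3⟩|⟨a1,b1,h1,h2,h3⟩|⟨h1,h2⟩|⟨h1,h2⟩) <;> simp_all [hval]
    · rintro ⟨h1, h2⟩
      exact Or.inr (Or.inl ⟨b, b', rfl, rfl, h1, by simpa [hval] using h2⟩)
  -- splitting of the Laplacian action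
  have hInl : ∀ (x : (Fin n ⊕ Fin k) → ℝ) (a : Fin n), (H.lapMatrix ℝ *ᵥ x) (Sum.inl a)
      = (G.lapMatrix ℝ *ᵥ (x ∘ Sum.inl)) a
        + (if a = v then x (Sum.inl v) - x (Sum.inr w) else 0) := by
    intro x a
    rw [lap_mulVec_sum_s6, lap_mulVec_sum_s6, Fintype.sum_sum_type]
    congr 1
    · exact Finset.sum_congr rfl fun a' _ => by rw [if_congr (hll a a') rfl rfl]; rfl
    · rcases eq_or_ne a v with rfl | hav
      · simp [hlr]
      · simp [hlr, hav]
  have hInr : ∀ (x : (Fin n ⊕ Fin k) → ℝ) (b : Fin k), (H.lapMatrix ℝ *ᵥ x) (Sum.inr b)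
      = (if b = w then x (Sum.inr w) - x (Sum.inl v) else 0)
        + ∑ b', (if b ≠ b' ∧ (b = c ∨ b' = c) then x (Sum.inr b) - x (Sum.inr b') else 0) := by
    intro x b
    rw [lap_mulVec_sum_s6, Fintype.sum_sum_type]
    congr 1
    · rcases eq_or_ne b w with rfl | hbw
      · simp [hrl]
      · simp [hrl, hbw]
    · exact Finset.sum_congr rfl fun b' _ => by rw [if_congr (hrr b b') rfl rfl]
  -- sum reductions on the star side
  have hsum_leaf : ∀ (f : Fin k → ℝ) (b : Fin k), b ≠ c →
      (∑ b', if b ≠ b' ∧ (b = c ∨ b' = c) then f b' else 0) = f c := by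
    intro f b hb
    rw [Finset.sum_congr rfl fun b' _ => if_congr
      (show (b ≠ b' ∧ (b = c ∨ b' = c)) ↔ b' = c from
        ⟨fun h => h.2.resolve_left hb, fun h => ⟨fun hb' => hb (hb'.trans h), Or.inr h⟩⟩)
      rfl rfl]
    simp
  have hsum_center : ∀ (f : Fin k → ℝ),
      (∑ b', if c ≠ b' ∧ (c = c ∨ b' = c) then f b' else 0)
        = ∑ b' ∈ Finset.univ.erase c, f b' := by
    intro f
    rw [Finset.sum_congr rfl fun b' _ => if_congr
      (show (c ≠ b' ∧ (c = c ∨ b' = c)) ↔ ¬ (b' = c) from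
        ⟨fun h hb' => h.1 hb'.symm, fun h => ⟨fun h' => h h'.symm, Or.inl rfl⟩⟩)
      rfl rfl]
    rw [← Finset.sum_filter, Finset.filter_ne']
  have hcard1 : ((Finset.univ : Finset (Fin k)).erase c).card = k - 1 := by
    rw [Finset.card_erase_of_mem (Finset.mem_univ c), Finset.card_univ, Fintype.card_fin]
  have hcard1R : (((Finset.univ : Finset (Fin k)).erase c).card : ℝ) = (k:ℝ) - 1 := by
    rw [hcard1, Nat.cast_sub (by omega : 1 ≤ k)]; push_cast; ring
  -- the coefficient function for the star part of an eigenvector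
  set φ : Fin k → ℝ := fun b =>
    if b = c then (if w = c then 1 else 1-(k:ℝ)) else (if w = c then (1-(k:ℝ))⁻¹ else 1)
    with hφdef
  have hφc : φ c = if w = c then 1 else 1-(k:ℝ) := by simp [hφdef]
  have hφleaf : ∀ b, b ≠ c → φ b = if w = c then (1-(k:ℝ))⁻¹ else 1 := by
    intro b hb; simp [hφdef, hb]
  have hφw : φ w = 1 := by
    rcases eq_or_ne w c with h | h
    · rw [h, hφc, if_pos h]
    · rw [hφleaf w h, if_neg h]
  -- eigenvector equations determine the star part
  have hzdet : ∀ x : (Fin n ⊕ Fin k) → ℝ, (∀ i, (H.lapMatrix ℝ *ᵥ x) i = (k:ℝ) * x i) →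
      ∀ b, x (Sum.inr b) = φ b * x (Sum.inl v) := by
    intro x hx
    have hleaf : ∀ b, b ≠ c → b ≠ w →
        (1 - (k:ℝ)) * x (Sum.inr b) = x (Sum.inr c) := by
      intro b hbc hbw
      have E := hx (Sum.inr b)
      rw [hInr, if_neg hbw, hsum_leaf _ b hbc] at E
      linear_combination E
    have Ec := hx (Sum.inr c)
    rw [hInr, hsum_center] at Ec
    rcases eq_or_ne w c with hwc | hwc
    · -- w is the center
      rw [if_pos hwc.symm] at Ec
      have hS : (1 - (k:ℝ)) * (∑ b' ∈ Finset.univ.erase c, x (Sum.inr b'))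
          = ((k:ℝ) - 1) * x (Sum.inr c) := by
        rw [Finset.mul_sum,
          Finset.sum_congr rfl fun b' hb' =>
            hleaf b' (Finset.ne_of_mem_erase hb') (by rw [hwc]; exact Finset.ne_of_mem_erase hb'),
          Finset.sum_const, nsmul_eq_mul, hcard1R]
      rw [Finset.sum_sub_distrib, Finset.sum_const, nsmul_eq_mul, hcard1R, hwc] at Ec
      have hcy : x (Sum.inr c) = x (Sum.inl v) := by
        have h2 : ((k:ℝ) - 1) * x (Sum.inr c) = ((k:ℝ) - 1) * x (Sum.inl v) := by
          linear_combination (-1 : ℝ) * hS - (1 - (k:ℝ)) * Ec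
        exact mul_left_cancel₀ hk1 h2
      intro b
      rcases eq_or_ne b c with rfl | hbc
      · rw [hφc, if_pos hwc, one_mul]; exact hcy
      · have h3 := hleaf b hbc (by rw [hwc]; exact hbc)
        rw [hcy] at h3
        rw [hφleaf b hbc, if_pos hwc]
        apply mul_left_cancel₀ ht
        rw [h3]; field_simp
      -- end w = c
    · -- w is a leaf
      rw [if_neg (fun h => hwc h.symm)] at Ec
      have Ew := hx (Sum.inr w)
      rw [hInr, if_pos rfl, hsum_leaf _ w hwc] at Ew
      have hwmem : w ∈ Finset.univ.erase c := Finset.mem_erase.mpr ⟨hwc, Finset.mem_univ w⟩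
      have hsplit : (∑ b' ∈ Finset.univ.erase c, x (Sum.inr b'))
          = x (Sum.inr w) + ∑ b' ∈ (Finset.univ.erase c).erase w, x (Sum.inr b') :=
        (Finset.add_sum_erase _ (fun b' => x (Sum.inr b')) hwmem).symm
      have hcard2R : ((((Finset.univ : Finset (Fin k)).erase c).erase w).card : ℝ)
          = (k:ℝ) - 2 := by
        rw [Finset.card_erase_of_mem hwmem, hcard1, Nat.cast_sub (by omega : 1 ≤ k - 1),
          Nat.cast_sub (by omega : 1 ≤ k)]
        push_cast; ring
      have hS2 : (1 - (k:ℝ)) * (∑ b' ∈ (Finset.univ.erase c).erase w, x (Sum.inr b'))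
          = ((k:ℝ) - 2) * x (Sum.inr c) := by
        rw [Finset.mul_sum,
          Finset.sum_congr rfl fun b' hb' =>
            hleaf b' (Finset.ne_of_mem_erase (Finset.mem_of_mem_erase hb'))
              (Finset.ne_of_mem_erase hb'),
          Finset.sum_const, nsmul_eq_mul, hcard2R]
      rw [Finset.sum_sub_distrib, Finset.sum_const, nsmul_eq_mul, hcard1R, hsplit] at Ec
      have hzc : (1 - (k:ℝ)) * x (Sum.inr w) = x (Sum.inr c) := by
        linear_combination (-(1:ℝ) + (k:ℝ)) * Ec - hS2
      have hwy : x (Sum.inr w) = x (Sum.inl v) := by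
        linear_combination Ew - hzc
      intro b
      rcases eq_or_ne b c with rfl | hbc
      · rw [hφc, if_neg hwc]
        linear_combination hwy * (1 - (k:ℝ)) - hzc
      · rcases eq_or_ne b w with rfl | hbw
        · rw [hφleaf b hbc, if_neg hwc, one_mul]; exact hwy
        · have h3 := hleaf b hbc hbw
          rw [hφleaf b hbc, if_neg hwc, one_mul]
          apply mul_left_cancel₀ ht
          rw [h3]
          linear_combination hwy * (1 - (k:ℝ)) - hzc
  -- eigenvector of H restricts to eigenvector of G
  have hforward : ∀ x : (Fin n ⊕ Fin k) → ℝ, (∀ i, (H.lapMatrix ℝ *ᵥ x) i = (k:ℝ) * x i) →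
      ∀ a, (G.lapMatrix ℝ *ᵥ (x ∘ Sum.inl)) a = (k:ℝ) * (x ∘ Sum.inl) a := by
    intro x hx a
    have E := hx (Sum.inl a)
    rw [hInl] at E
    rcases eq_or_ne a v with rfl | hav
    · have hw := hzdet x hx w
      rw [hφw, one_mul] at hw
      rw [if_pos rfl, hw] at E
      simpa using E
    · rw [if_neg hav, add_zero] at E
      exact E
  -- eigenvector of G extends to eigenvector of H
  have hback : ∀ y : Fin n → ℝ, (∀ a, (G.lapMatrix ℝ *ᵥ y) a = (k:ℝ) * y a) →
      ∀ i, (H.lapMatrix ℝ *ᵥ (Sum.elim y (fun b => φ b * y v))) i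
        = (k:ℝ) * (Sum.elim y (fun b => φ b * y v)) i := by
    intro y hy i
    cases i with
    | inl a =>
      rw [hInl]
      have hcomp : (Sum.elim y (fun b => φ b * y v)) ∘ Sum.inl = y := rfl
      rw [hcomp]
      simp only [Sum.elim_inl, Sum.elim_inr, hφw, one_mul]
      rcases eq_or_ne a v with rfl | hav
      · rw [if_pos rfl, sub_self, add_zero]; exact hy _
      · rw [if_neg hav, add_zero]; exact hy a
    | inr b =>
      rw [hInr]
      simp only [Sum.elim_inl, Sum.elim_inr, hφw, one_mul, sub_self, ite_self, zero_add]
      rcases eq_or_ne b c with rfl | hbc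
      · rw [hsum_center (fun b' => φ c * y v - φ b' * y v),
          Finset.sum_congr rfl fun b' hb' => by
            rw [hφleaf b' (Finset.ne_of_mem_erase hb')],
          Finset.sum_const, nsmul_eq_mul, hcard1R, hφc]
        rcases eq_or_ne w c with hwc | hwc
        · rw [if_pos hwc, if_pos hwc]
          field_simp
          ring
        · rw [if_neg hwc, if_neg hwc]
          ring
      · rw [hsum_leaf (fun b' => φ b * y v - φ b' * y v) b hbc, hφleaf b hbc, hφc]
        rcases eq_or_ne w c with hwc | hwc
        · rw [if_pos hwc, if_pos hwc]
          field_simp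
          ring
        · rw [if_neg hwc, if_neg hwc]
          ring
  -- membership characterizations
  have memH : ∀ x : (Fin n ⊕ Fin k) → ℝ,
      x ∈ Module.End.eigenspace (Matrix.toLin' (H.lapMatrix ℝ)) (k:ℝ) ↔
        ∀ i, (H.lapMatrix ℝ *ᵥ x) i = (k:ℝ) * x i := by
    intro x
    rw [Module.End.mem_eigenspace_iff, Matrix.toLin'_apply, funext_iff]
    exact forall_congr' fun i => by simp
  have memG : ∀ y : Fin n → ℝ,
      y ∈ Module.End.eigenspace (Matrix.toLin' (G.lapMatrix ℝ)) (k:ℝ) ↔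
        ∀ a, (G.lapMatrix ℝ *ᵥ y) a = (k:ℝ) * y a := by
    intro y
    rw [Module.End.mem_eigenspace_iff, Matrix.toLin'_apply, funext_iff]
    exact forall_congr' fun a => by simp
  -- the linear equivalence between the two eigenspaces
  have e : (Module.End.eigenspace (Matrix.toLin' (H.lapMatrix ℝ)) (k:ℝ)) ≃ₗ[ℝ]
      (Module.End.eigenspace (Matrix.toLin' (G.lapMatrix ℝ)) (k:ℝ)) :=
    { toFun := fun x => ⟨(x : (Fin n ⊕ Fin k) → ℝ) ∘ Sum.inl,
        (memG _).2 (hforward x ((memH _).1 x.2))⟩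
      invFun := fun y => ⟨Sum.elim (y : Fin n → ℝ) (fun b => φ b * (y : Fin n → ℝ) v),
        (memH _).2 (hback y ((memG _).1 y.2))⟩
      map_add' := fun x₁ x₂ => rfl
      map_smul' := fun r x => rfl
      left_inv := fun x => Subtype.ext (by
        funext p
        cases p with
        | inl a => rfl
        | inr b => exact (hzdet x ((memH _).1 x.2) b).symm)
      right_inv := fun y => Subtype.ext (by funext a; rfl) }
  exact LinearEquiv.finrank_eq e
end

section
/- Let G be a graph containing k pairwise vertex-disjoint d-clusters of orders r_1, ..., r_k (a d-cluster is an independent set of at least 2 vertices each having the same set of d neighbours). Then d is a Laplacian eigenvalue of G with multiplicity at least (r_1 + ... + r_k) - k. -/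
open Matrix SimpleGraph

/-- A graph with `k` pairwise disjoint `d`-clusters of orders `r 1, ..., r k` has `d` as a
Laplacian eigenvalue with multiplicity at least `∑ r i - k`. -/
theorem stmt7 {n k d : ℕ} (G : SimpleGraph (Fin n)) [DecidableRel G.Adj]
    (C : Fin k → Finset (Fin n)) (r : Fin k → ℕ)
    (hcard : ∀ i, (C i).card = r i) (horder : ∀ i, 2 ≤ r i)
    (hdisj : ∀ i j, i ≠ j → Disjoint (C i) (C j))
    (hindep : ∀ i, ∀ u ∈ C i, ∀ v ∈ C i, ¬ G.Adj u v)
    (hnbr : ∀ i, ∀ u ∈ C i, ∀ v ∈ C i, G.neighborFinset u = G.neighborFinset v)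
    (hdeg : ∀ i, ∀ u ∈ C i, G.degree u = d) :
    (∑ i, r i) - k ≤ mult (G.lapMatrix ℝ) (d : ℝ) := by
  classical
  have hne : ∀ i, (C i).Nonempty := fun i => Finset.card_pos.mp (by rw [hcard]; have := horder i; omega)
  set b : Fin k → Fin n := fun i => (hne i).choose with hb
  have hbmem : ∀ i, b i ∈ C i := fun i => (hne i).choose_spec
  set ι := (i : Fin k) × {v : Fin n // v ∈ (C i).erase (b i)} with hι
  set x : ι → (Fin n → ℝ) := fun j w =>
    (if w = j.2.1 then 1 else 0) - (if w = b j.1 then 1 else 0) with hx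
  have hmemC : ∀ j : ι, j.2.1 ∈ C j.1 := fun j => Finset.mem_of_mem_erase j.2.2
  have hneb : ∀ j : ι, j.2.1 ≠ b j.1 := fun j => Finset.ne_of_mem_erase j.2.2
  -- eigenvector property
  have heig : ∀ j : ι, x j ∈ Module.End.eigenspace (Matrix.toLin' (G.lapMatrix ℝ)) (d : ℝ) := by
    intro j
    rw [Module.End.mem_eigenspace_iff]
    have hv := hmemC j
    have hbm := hbmem j.1
    funext w
    rw [Matrix.toLin'_apply, lapMatrix_mulVec_apply]
    have hsum : ∑ u ∈ G.neighborFinset w, x j u = 0 := by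
      have hNb : G.neighborFinset j.2.1 = G.neighborFinset (b j.1) :=
        hnbr j.1 _ hv _ hbm
      have h1 : ∀ v0 : Fin n, (∑ u ∈ G.neighborFinset w, (if u = v0 then (1:ℝ) else 0))
          = if v0 ∈ G.neighborFinset w then 1 else 0 := by
        intro v0; simp [Finset.sum_ite_eq']
      simp only [hx, Finset.sum_sub_distrib, h1]
      have : (j.2.1 ∈ G.neighborFinset w) ↔ (b j.1 ∈ G.neighborFinset w) := by
        simp only [mem_neighborFinset]
        constructor
        · intro h
          have : w ∈ G.neighborFinset j.2.1 := by simp [mem_neighborFinset, h.symm]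
          rw [hNb] at this
          exact ((mem_neighborFinset _ _ _).mp this).symm
        · intro h
          have : w ∈ G.neighborFinset (b j.1) := by simp [mem_neighborFinset, h.symm]
          rw [← hNb] at this
          exact ((mem_neighborFinset _ _ _).mp this).symm
      by_cases h : j.2.1 ∈ G.neighborFinset w <;> simp [h, this.mp, this.symm.mp] at * <;> simp [h, this]
    rw [hsum, sub_zero]
    by_cases hw1 : w = j.2.1
    · subst hw1; rw [hdeg j.1 _ hv]; simp
    · by_cases hw2 : w = b j.1
      · subst hw2; rw [hdeg j.1 _ hbm]; simp
      · simp [hx, hw1, hw2]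
  -- linear independence
  have hli : LinearIndependent ℝ x := by
    rw [Fintype.linearIndependent_iff]
    intro g hg j
    have := congrFun hg j.2.1
    rw [Finset.sum_apply] at this
    simp only [Pi.zero_apply] at this
    rw [Finset.sum_eq_single j] at this
    · simpa [hx, hneb j] using this
    · intro j' _ hj'
      have h1 : j.2.1 ≠ j'.2.1 := by
        intro h
        apply hj'
        have : j'.1 = j.1 := by
          by_contra hne'
          exact (Finset.disjoint_left.mp (hdisj j'.1 j.1 hne') (hmemC j')) (h ▸ hmemC j)
        obtain ⟨i1, v1⟩ := j; obtain ⟨i2, v2⟩ := j'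
        cases this
        exact congrArg (Sigma.mk i1) (Subtype.ext h.symm)
      have h2 : j.2.1 ≠ b j'.1 := by
        intro h
        by_cases hne' : j'.1 = j.1
        · rw [hne'] at h; exact hneb j h
        · exact (Finset.disjoint_left.mp (hdisj j.1 j'.1 (fun hh => hne' hh.symm)) (hmemC j))
            (h ▸ hbmem j'.1)
      simp [hx, h1, h2]
    · intro h; exact absurd (Finset.mem_univ j) h
  -- package into eigenspace
  set E := Module.End.eigenspace (Matrix.toLin' (G.lapMatrix ℝ)) (d : ℝ) with hE
  set f : ι → E := fun j => ⟨x j, heig j⟩ with hf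
  have hlif : LinearIndependent ℝ f := by
    have : x = (E.subtype) ∘ f := rfl
    exact (LinearIndependent.of_comp E.subtype (this ▸ hli))
  have hcardle := hlif.fintype_card_le_finrank
  have hcardι : Fintype.card ι = (∑ i, r i) - k := by
    rw [Fintype.card_sigma]
    have : ∀ i, Fintype.card {v : Fin n // v ∈ (C i).erase (b i)} = r i - 1 := by
      intro i
      rw [Fintype.card_coe, Finset.card_erase_of_mem (hbmem i), hcard]
    simp only [this]
    have h1 : ∑ i : Fin k, r i = (∑ i : Fin k, (r i - 1)) + k := by
      have h2 : ∑ i : Fin k, r i = ∑ i : Fin k, ((r i - 1) + 1) :=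
        Finset.sum_congr rfl (fun i _ => by have := horder i; omega)
      rw [h2, Finset.sum_add_distrib]
      simp
    omega
  rw [hcardι] at hcardle
  exact hcardle
end

section
/- For every positive integer k and every i ∈ {1,...,k}, the number 4·cos²(πi/(2k+1)) is a Laplacian eigenvalue of any graph G with multiplicity at least p_k(G) − q_k(G), where p_k(G) is the number of pendant paths of length k in G and q_k(G) is the number of vertices of degree at least 3 that are an end vertex of some pendant path of length k. -/
/-!
Along a pendant path `w₀ … w_k`, put `x_j = cos ((2j+1)φ)` on `w_j` and zero elsewhere. Then
`x_{-1} = x_0` models the free end, and the identity `x_{j-1} + x_{j+1} = (2 - 4 sin² φ) x_j`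
says that `L x = 4 sin² φ · x` at every vertex except the attachment vertex `w_k`, provided
`x_k = cos ((2k+1)φ) = 0`; at `w_k` the defect is `-x_{k-1}`. These vectors are linearly
independent, since each is the only one that is nonzero on its own pendant vertex, so every
combination whose coefficients sum to zero over each attachment vertex is an eigenvector: this
gives `p_k - q_k` dimensions. For `φ = π/2 - πi/(2k+1)` we get `4 sin² φ = 4 cos² (πi/(2k+1))`.
-/

open Matrix SimpleGraph Real

/-- A pendant path of length `k`, recorded as its sequence of vertices from the pendant
end `w 0` (degree one) through internal vertices of degree two to the attachment vertex
`w (Fin.last k)` of degree greater than two. -/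
def IsPendantPath {n : ℕ} (G : SimpleGraph (Fin n)) [DecidableRel G.Adj] (k : ℕ)
    (w : Fin (k + 1) → Fin n) : Prop :=
  Function.Injective w ∧
  (∀ i : Fin k, G.Adj (w i.castSucc) (w i.succ)) ∧
  G.degree (w 0) = 1 ∧
  (∀ i : Fin (k + 1), i ≠ 0 → i ≠ Fin.last k → G.degree (w i) = 2) ∧
  2 < G.degree (w (Fin.last k))

/-- `pk G k` is the number of pendant paths of length `k` in `G`. -/
noncomputable def pk {n : ℕ} (G : SimpleGraph (Fin n)) [DecidableRel G.Adj] (k : ℕ) : ℕ :=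
  Nat.card {w : Fin (k + 1) → Fin n // IsPendantPath G k w}

/-- `qk G k` is the number of vertices of degree greater than two that are end vertices of
some pendant path of length `k` in `G`. -/
noncomputable def qk {n : ℕ} (G : SimpleGraph (Fin n)) [DecidableRel G.Adj] (k : ℕ) : ℕ :=
  Nat.card {v : Fin n // 2 < G.degree v ∧
    ∃ w : Fin (k + 1) → Fin n, IsPendantPath G k w ∧ w (Fin.last k) = v}

theorem linearIndependent_of_apply_eq_zero_of_ne {R ι α : Type*} [Ring R] [NoZeroDivisors R]
    [Fintype ι] {v : ι → α → R} (x : ι → α) (hdiag : ∀ i, v i (x i) ≠ 0)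
    (hoff : ∀ i j, i ≠ j → v j (x i) = 0) : LinearIndependent R v := by
  classical
  refine Fintype.linearIndependent_iff.2 fun g hg i => ?_
  have hgi := congrFun hg (x i)
  simp only [Finset.sum_apply, Pi.smul_apply, smul_eq_mul, Pi.zero_apply] at hgi
  rw [Finset.sum_eq_single i (fun j _ hji => by rw [hoff i j hji.symm, mul_zero])
    (fun h => absurd (Finset.mem_univ i) h)] at hgi
  exact (mul_eq_zero.1 hgi).resolve_right (hdiag i)

theorem LinearIndependent.card_sub_card_range_le_finrank {K V ι κ : Type*} [Field K]
    [AddCommGroup V] [Module K V] [FiniteDimensional K V] [Fintype ι] [DecidableEq κ]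
    {v : ι → V} (hv : LinearIndependent K v) (a : ι → κ) {W : Submodule K V}
    (hW : ∀ c : ι → K, ∑ i, c i • (Pi.single (a i) (1 : K) : κ → K) = 0 → ∑ i, c i • v i ∈ W) :
    Fintype.card ι - Fintype.card (Set.range a) ≤ Module.finrank K W := by
  set A := Fintype.linearCombination K (fun i => (Pi.single (a i) (1 : K) : κ → K))
  set T := Fintype.linearCombination K v
  have hker : Module.finrank K (LinearMap.ker A) ≤ Module.finrank K W := by
    rw [(Submodule.equivMapOfInjective T hv.fintypeLinearCombination_injective _).finrank_eq]
    refine Submodule.finrank_mono ?_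
    rintro _ ⟨c, hc, rfl⟩
    exact hW c hc
  have hrange : Module.finrank K (LinearMap.range A) ≤ Fintype.card (Set.range a) := by
    rw [Fintype.range_linearCombination,
      show Set.range (fun i => (Pi.single (a i) (1 : K) : κ → K)) =
        Set.range (fun q : Set.range a => (Pi.single q.1 (1 : K) : κ → K)) by
          ext; simp]
    exact finrank_range_le_card _
  have := LinearMap.finrank_range_add_finrank_ker A
  rw [Module.finrank_fintype_fun_eq_card] at this
  omega

theorem cos_sub_add_cos_add (a φ : ℝ) :
    cos (a - 2 * φ) + cos (a + 2 * φ) = (2 - 4 * sin φ ^ 2) * cos a := by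
  rw [cos_sub, cos_add, cos_two_mul, sin_two_mul]
  linear_combination (4 * cos a) * sin_sq_add_cos_sq φ

namespace IsPendantPath

variable {n k : ℕ} {G : SimpleGraph (Fin n)} [DecidableRel G.Adj] {w w' : Fin (k + 1) → Fin n}

theorem pos (hw : IsPendantPath G k w) : 0 < k := by
  obtain ⟨-, -, h0, -, hlast⟩ := hw
  rcases k with _ | _
  · rw [show (0 : Fin 1) = Fin.last 0 from rfl] at h0
    omega
  · omega

theorem adj_succ (hw : IsPendantPath G k w) {j : ℕ} (hj : j < k) :
    G.Adj (w ⟨j, by omega⟩) (w ⟨j + 1, by omega⟩) :=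
  hw.2.1 ⟨j, hj⟩

theorem apply_ne_apply (hw : IsPendantPath G k w) {i j : ℕ} {hi : i < k + 1} {hj : j < k + 1}
    (hij : i ≠ j) : w ⟨i, hi⟩ ≠ w ⟨j, hj⟩ :=
  fun h => hij (Fin.mk.inj_iff.1 (hw.1 h))

theorem neighborFinset_zero (hw : IsPendantPath G k w) :
    G.neighborFinset (w 0) = {w ⟨1, Nat.succ_lt_succ hw.pos⟩} :=
  (Finset.eq_of_subset_of_card_le
    (by simpa using hw.adj_succ hw.pos)
    (by simp [hw.2.2.1])).symm

theorem neighborFinset_of_pos_of_lt (hw : IsPendantPath G k w) {j : ℕ} (h0 : 0 < j)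
    (hk : j < k) :
    G.neighborFinset (w ⟨j, by omega⟩) = {w ⟨j - 1, by omega⟩, w ⟨j + 1, by omega⟩} := by
  refine (Finset.eq_of_subset_of_card_le ?_ ?_).symm
  · have hprev := hw.adj_succ (j := j - 1) (by omega)
    simp only [Nat.sub_add_cancel h0] at hprev
    simp [Finset.insert_subset_iff, hprev.symm, hw.adj_succ hk]
  · rw [Finset.card_pair (hw.apply_ne_apply (by omega)), G.card_neighborFinset_eq_degree,
      hw.2.2.2.1 _ (by simp [Fin.ext_iff]; omega) (by simp [Fin.ext_iff]; omega)]

-- For `j = 0` the first alternative is `u = w 0`, which cannot happen since `G` is loopless.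
theorem eq_or_eq_of_adj (hw : IsPendantPath G k w) {j : ℕ} (hj : j < k) {u : Fin n}
    (h : G.Adj (w ⟨j, by omega⟩) u) : u = w ⟨j - 1, by omega⟩ ∨ u = w ⟨j + 1, by omega⟩ := by
  rw [← G.mem_neighborFinset] at h
  rcases Nat.eq_zero_or_pos j with rfl | h0
  · rw [Fin.mk_zero, hw.neighborFinset_zero, Finset.mem_singleton] at h
    exact Or.inr h
  · rwa [hw.neighborFinset_of_pos_of_lt h0 hj, Finset.mem_insert, Finset.mem_singleton] at h

theorem eq_of_apply_zero_eq (hw : IsPendantPath G k w) (hw' : IsPendantPath G k w')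
    (h : w 0 = w' 0) : w = w' := by
  suffices ∀ j (hj : j < k + 1), w ⟨j, hj⟩ = w' ⟨j, hj⟩ from funext fun j => this j j.2
  intro j
  induction j using Nat.strong_induction_on with
  | _ j ih =>
    rcases j with _ | m
    · exact fun _ => h
    intro hm
    have hadj := hw'.adj_succ (j := m) (by omega)
    rw [← ih m (by omega)] at hadj
    rcases hw.eq_or_eq_of_adj (by omega) hadj with hprev | hnext
    · rw [ih (m - 1) (by omega)] at hprev
      exact absurd hprev (hw'.apply_ne_apply (by omega))
    · exact hnext.symm

theorem apply_ne_apply_zero (hw : IsPendantPath G k w) (hw' : IsPendantPath G k w')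
    (hne : w ≠ w') (j : Fin (k + 1)) : w' j ≠ w 0 := by
  intro h
  have hdeg := hw.2.2.1
  rw [← h] at hdeg
  by_cases h0 : j = 0
  · exact hne (hw.eq_of_apply_zero_eq hw' (h0 ▸ h).symm)
  by_cases hlast : j = Fin.last k
  · have := hw'.2.2.2.2
    rw [← hlast] at this
    omega
  · rw [hw'.2.2.2.1 j h0 hlast] at hdeg
    omega

theorem mem_range_of_adj (hw : IsPendantPath G k w) {j : ℕ} (hj : j < k) {u : Fin n}
    (h : G.Adj (w ⟨j, by omega⟩) u) : u ∈ Set.range w := by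
  rcases hw.eq_or_eq_of_adj hj h with rfl | rfl <;> exact Set.mem_range_self _

theorem adj_last_iff (hw : IsPendantPath G k w) (j : Fin (k + 1)) :
    G.Adj (w j) (w (Fin.last k)) ↔ j.val + 1 = k := by
  obtain ⟨j, hj⟩ := j
  have hlast : Fin.last k = ⟨k, by omega⟩ := rfl
  rw [hlast, Fin.val_mk]
  constructor
  · intro h
    have hjk : j < k := by
      by_contra hjk
      obtain rfl : j = k := by omega
      exact G.irrefl h
    rcases hw.eq_or_eq_of_adj hjk h with h' | h' <;>
      have := Fin.mk.inj_iff.1 (hw.1 h') <;> omega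
  · intro hk
    have := hw.adj_succ (j := j) (by omega)
    simpa only [hk] using this

end IsPendantPath

noncomputable def pendantVector {n k : ℕ} (w : Fin (k + 1) → Fin n) (φ : ℝ) : Fin n → ℝ :=
  Function.extend w (fun j => cos ((2 * (j : ℕ) + 1) * φ)) 0

theorem pendantVector_apply_of_notMem {n k : ℕ} {w : Fin (k + 1) → Fin n} (φ : ℝ) {v : Fin n}
    (hv : v ∉ Set.range w) : pendantVector w φ v = 0 :=
  Function.extend_apply' _ _ _ hv

namespace IsPendantPath

variable {n k : ℕ} {G : SimpleGraph (Fin n)} [DecidableRel G.Adj] {w : Fin (k + 1) → Fin n}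

theorem pendantVector_apply (hw : IsPendantPath G k w) (φ : ℝ) (j : Fin (k + 1)) :
    pendantVector w φ (w j) = cos ((2 * (j : ℕ) + 1) * φ) :=
  hw.1.extend_apply _ _ _

theorem pendantVector_apply_last (hw : IsPendantPath G k w) {φ : ℝ}
    (hφ : cos ((2 * k + 1) * φ) = 0) : pendantVector w φ (w (Fin.last k)) = 0 := by
  rwa [hw.pendantVector_apply, Fin.val_last]

theorem lapMatrix_mulVec_pendantVector_apply_of_lt (hw : IsPendantPath G k w) (φ : ℝ) {j : ℕ}
    (hj : j < k) :
    (G.lapMatrix ℝ *ᵥ pendantVector w φ) (w ⟨j, by omega⟩) =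
      4 * sin φ ^ 2 * pendantVector w φ (w ⟨j, by omega⟩) := by
  rw [lapMatrix_mulVec_apply]
  rcases j with _ | m
  · have hcos := cos_sub_add_cos_add φ φ
    rw [show φ - 2 * φ = -φ by ring, cos_neg] at hcos
    rw [Fin.mk_zero, hw.neighborFinset_zero, Finset.sum_singleton, hw.2.2.1,
      hw.pendantVector_apply, hw.pendantVector_apply]
    simp only [Fin.val_zero, Nat.cast_zero, Nat.cast_one]
    ring_nf at hcos ⊢
    linarith
  · have hcos := cos_sub_add_cos_add ((2 * (m + 1) + 1) * φ) φ
    rw [hw.neighborFinset_of_pos_of_lt m.succ_pos hj,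
      Finset.sum_pair (hw.apply_ne_apply (by omega)),
      hw.2.2.2.1 _ (by simp [Fin.ext_iff]) (by simp [Fin.ext_iff]; omega),
      hw.pendantVector_apply, hw.pendantVector_apply, hw.pendantVector_apply]
    push_cast
    ring_nf at hcos ⊢
    linarith

theorem lapMatrix_mulVec_pendantVector_apply_last (hw : IsPendantPath G k w) {φ : ℝ}
    (hφ : cos ((2 * k + 1) * φ) = 0) :
    (G.lapMatrix ℝ *ᵥ pendantVector w φ) (w (Fin.last k)) = -cos ((2 * k - 1) * φ) := by
  have hk := hw.pos
  have hprev : G.Adj (w (Fin.last k)) (w ⟨k - 1, by omega⟩) :=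
    ((hw.adj_last_iff _).2 (by simp only; omega)).symm
  rw [lapMatrix_mulVec_apply, hw.pendantVector_apply_last hφ, mul_zero, zero_sub,
    Finset.sum_eq_single_of_mem _ ((G.mem_neighborFinset _ _).2 hprev), hw.pendantVector_apply]
  · push_cast [Nat.cast_sub (show 1 ≤ k from hk)]
    ring_nf
  intro u hu hne
  by_cases hu' : u ∈ Set.range w
  · obtain ⟨j, rfl⟩ := hu'
    have hj := (hw.adj_last_iff j).1 ((G.mem_neighborFinset _ _).1 hu).symm
    exact absurd (congrArg w (Fin.ext (by simp only; omega))) hne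
  · exact pendantVector_apply_of_notMem φ hu'

theorem lapMatrix_mulVec_pendantVector_apply_of_notMem (hw : IsPendantPath G k w) {φ : ℝ}
    (hφ : cos ((2 * k + 1) * φ) = 0) {v : Fin n} (hv : v ∉ Set.range w) :
    (G.lapMatrix ℝ *ᵥ pendantVector w φ) v = 0 := by
  rw [lapMatrix_mulVec_apply, pendantVector_apply_of_notMem φ hv, mul_zero, zero_sub,
    neg_eq_zero]
  refine Finset.sum_eq_zero fun u hu => ?_
  by_cases hu' : u ∈ Set.range w
  · obtain ⟨⟨j, hj⟩, rfl⟩ := hu'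
    rcases Nat.lt_succ_iff_lt_or_eq.1 hj with hjk | rfl
    · exact absurd (hw.mem_range_of_adj hjk ((G.mem_neighborFinset _ _).1 hu).symm) hv
    · exact hw.pendantVector_apply_last hφ
  · exact pendantVector_apply_of_notMem φ hu'

theorem lapMatrix_mulVec_pendantVector (hw : IsPendantPath G k w) {φ : ℝ}
    (hφ : cos ((2 * k + 1) * φ) = 0) :
    G.lapMatrix ℝ *ᵥ pendantVector w φ =
      (4 * sin φ ^ 2) • pendantVector w φ -
        cos ((2 * k - 1) * φ) • Pi.single (w (Fin.last k)) 1 := by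
  funext v
  simp only [Pi.sub_apply, Pi.smul_apply, smul_eq_mul, Pi.single_apply]
  by_cases hv : v ∈ Set.range w
  · obtain ⟨⟨j, hj⟩, rfl⟩ := hv
    rcases Nat.lt_succ_iff_lt_or_eq.1 hj with hjk | hjk
    · rw [hw.lapMatrix_mulVec_pendantVector_apply_of_lt φ hjk,
        if_neg (show w ⟨j, hj⟩ ≠ w (Fin.last k) from hw.apply_ne_apply (Nat.ne_of_lt hjk)),
        mul_zero, sub_zero]
    · rw [show (⟨j, hj⟩ : Fin (k + 1)) = Fin.last k from Fin.ext hjk,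
        hw.lapMatrix_mulVec_pendantVector_apply_last hφ, hw.pendantVector_apply_last hφ,
        if_pos rfl]
      ring
  · rw [hw.lapMatrix_mulVec_pendantVector_apply_of_notMem hφ hv,
      pendantVector_apply_of_notMem φ hv, if_neg (fun h => hv ⟨_, h.symm⟩)]
    ring

end IsPendantPath

theorem sum_smul_pendantVector_mem_eigenspace {n k : ℕ} {G : SimpleGraph (Fin n)}
    [DecidableRel G.Adj] {ι : Type*} [Fintype ι] {w : ι → Fin (k + 1) → Fin n}
    (hw : ∀ i, IsPendantPath G k (w i)) {φ : ℝ} (hφ : cos ((2 * k + 1) * φ) = 0) (c : ι → ℝ)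
    (hc : ∑ i, c i • (Pi.single (w i (Fin.last k)) 1 : Fin n → ℝ) = 0) :
    ∑ i, c i • pendantVector (w i) φ ∈
      Module.End.eigenspace (toLin' (G.lapMatrix ℝ)) (4 * sin φ ^ 2) := by
  rw [Module.End.mem_eigenspace_iff, toLin'_apply]
  calc G.lapMatrix ℝ *ᵥ ∑ i, c i • pendantVector (w i) φ
      = ∑ i, c i • ((4 * sin φ ^ 2) • pendantVector (w i) φ -
          cos ((2 * k - 1) * φ) • Pi.single (w i (Fin.last k)) 1) := by
        simp only [mulVec_sum, mulVec_smul, (hw _).lapMatrix_mulVec_pendantVector hφ]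
    _ = (4 * sin φ ^ 2) • ∑ i, c i • pendantVector (w i) φ -
          cos ((2 * k - 1) * φ) • ∑ i, c i • (Pi.single (w i (Fin.last k)) 1 : Fin n → ℝ) := by
        simp only [smul_sub, Finset.sum_sub_distrib, Finset.smul_sum, smul_comm (c _)]
    _ = (4 * sin φ ^ 2) • ∑ i, c i • pendantVector (w i) φ := by
        rw [hc, smul_zero, sub_zero]

theorem card_range_last_eq_qk {n : ℕ} (G : SimpleGraph (Fin n)) [DecidableRel G.Adj] (k : ℕ)
    [Fintype {w : Fin (k + 1) → Fin n // IsPendantPath G k w}] :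
    Fintype.card (Set.range fun w : {w // IsPendantPath G k w} => w.1 (Fin.last k)) =
      qk G k := by
  rw [qk, ← Nat.card_eq_fintype_card]
  refine Nat.card_congr (Equiv.subtypeEquivRight fun v => ?_)
  constructor
  · rintro ⟨w, rfl⟩
    exact ⟨w.2.2.2.2.2, w.1, w.2, rfl⟩
  · rintro ⟨-, w, hw, rfl⟩
    exact ⟨⟨w, hw⟩, rfl⟩

theorem pk_sub_qk_le_mult {n : ℕ} (G : SimpleGraph (Fin n)) [DecidableRel G.Adj] {k : ℕ}
    {φ : ℝ} (hφ : cos ((2 * k + 1) * φ) = 0) (hφ₀ : cos φ ≠ 0) :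
    pk G k - qk G k ≤ mult (G.lapMatrix ℝ) (4 * sin φ ^ 2) := by
  classical
  let P := {w : Fin (k + 1) → Fin n // IsPendantPath G k w}
  have : Fintype P := Fintype.ofFinite P
  have hindep : LinearIndependent ℝ fun p : P => pendantVector p.1 φ := by
    refine linearIndependent_of_apply_eq_zero_of_ne (fun p => p.1 0)
      (fun p => by simpa [p.2.pendantVector_apply] using hφ₀) fun p q hpq => ?_
    refine pendantVector_apply_of_notMem φ ?_
    rintro ⟨j, hj⟩
    exact p.2.apply_ne_apply_zero q.2 (fun h => hpq (Subtype.ext h)) j hj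
  rw [← card_range_last_eq_qk, pk, Nat.card_eq_fintype_card]
  exact hindep.card_sub_card_range_le_finrank _
    (sum_smul_pendantVector_mem_eigenspace (fun p : P => p.2) hφ)

theorem stmt8_general {n : ℕ} (G : SimpleGraph (Fin n)) [DecidableRel G.Adj]
    (k i : ℕ) (hi1 : 1 ≤ i) (hik : i ≤ k) :
    pk G k - qk G k ≤
      mult (G.lapMatrix ℝ) (4 * Real.cos (Real.pi * i / (2 * k + 1)) ^ 2) := by
  set θ := π * i / (2 * k + 1) with hθ
  have h2k : (0 : ℝ) < 2 * k + 1 := by positivity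
  have hθ₀ : 0 < θ := div_pos (mul_pos pi_pos (by exact_mod_cast hi1)) h2k
  have hθπ : θ < π := by
    rw [hθ, div_lt_iff₀ h2k]
    nlinarith [pi_pos, (by exact_mod_cast hik : (i : ℝ) ≤ k)]
  have hcos : cos (π / 2 - θ) ≠ 0 := (cos_pos_of_mem_Ioo ⟨by linarith, by linarith⟩).ne'
  have hodd : cos ((2 * k + 1) * (π / 2 - θ)) = 0 := by
    rw [cos_eq_zero_iff]
    refine ⟨k - i, ?_⟩
    rw [hθ]
    field_simp
    push_cast
    ring
  rw [← sin_pi_div_two_sub]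
  exact pk_sub_qk_le_mult G hodd hcos

theorem stmt8 {n : ℕ} (G : SimpleGraph (Fin n)) [DecidableRel G.Adj]
    (k i : ℕ) (hk : 1 ≤ k) (hi1 : 1 ≤ i) (hik : i ≤ k) :
    pk G k - qk G k ≤
      mult (G.lapMatrix ℝ) (4 * Real.cos (Real.pi * i / (2 * k + 1)) ^ 2) :=
  stmt8_general G k i hi1 hik
end

section
/- For any real ρ ∉ {0,1} and any n×n real symmetric matrix L, the equation L = D(M) − ρM has a unique solution M among n×n real symmetric matrices, where D(M) is the diagonal matrix of row sums of M. -/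
open Matrix

/-!
`D(M)` and `M` have the same row sums, so applying `L = D(M) - ρM` to the all-ones vector gives
`(1 - ρ) · M1 = L1`. Hence `D(M) = diag(L1 / (1 - ρ))` is determined by `L`, and then so is
`M = ρ⁻¹ (D(M) - L)`; conversely this `M` is a solution, symmetric when `L` is.
-/

namespace Matrix

theorem diagonal_mulVec_one {ι α : Type*} [Fintype ι] [DecidableEq ι] [NonAssocSemiring α]
    (v : ι → α) : diagonal v *ᵥ 1 = v :=
  funext fun i => by rw [mulVec_diagonal, Pi.one_apply, mul_one]

variable {n : ℕ}

theorem rsd_eq_diagonal_mulVec_one (M : Matrix (Fin n) (Fin n) ℝ) :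
    rsd M = diagonal (M *ᵥ 1) := by
  rw [rsd]
  congr 1
  funext i
  simp only [mulVec, dotProduct, Pi.one_apply, mul_one]

theorem rsd_mulVec_one (M : Matrix (Fin n) (Fin n) ℝ) : rsd M *ᵥ 1 = M *ᵥ 1 := by
  rw [rsd_eq_diagonal_mulVec_one, diagonal_mulVec_one]

theorem rsd_sub_smul_mulVec_one (ρ : ℝ) (M : Matrix (Fin n) (Fin n) ℝ) :
    (rsd M - ρ • M) *ᵥ 1 = (1 - ρ) • (M *ᵥ 1) := by
  rw [sub_mulVec, rsd_mulVec_one, smul_mulVec, sub_smul, one_smul]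

noncomputable def rsdSolution (ρ : ℝ) (L : Matrix (Fin n) (Fin n) ℝ) : Matrix (Fin n) (Fin n) ℝ :=
  ρ⁻¹ • (diagonal ((1 - ρ)⁻¹ • (L *ᵥ 1)) - L)

theorem rsdSolution_mulVec_one {ρ : ℝ} (hρ0 : ρ ≠ 0) (hρ1 : ρ ≠ 1)
    (L : Matrix (Fin n) (Fin n) ℝ) : rsdSolution ρ L *ᵥ 1 = (1 - ρ)⁻¹ • (L *ᵥ 1) := by
  have h1ρ : 1 - ρ ≠ 0 := sub_ne_zero.mpr hρ1.symm
  have hcoef : ρ⁻¹ * ((1 - ρ)⁻¹ - 1) = (1 - ρ)⁻¹ := by field_simp; ring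
  rw [rsdSolution, smul_mulVec, sub_mulVec, diagonal_mulVec_one]
  nth_rw 2 [← one_smul ℝ (L *ᵥ 1)]
  rw [← sub_smul, smul_smul, hcoef]

theorem IsSymm.rsdSolution {L : Matrix (Fin n) (Fin n) ℝ} (hL : L.IsSymm) (ρ : ℝ) :
    (rsdSolution ρ L).IsSymm :=
  ((isSymm_diagonal _).sub hL).smul ρ⁻¹

theorem rsd_sub_smul_eq_iff {ρ : ℝ} (hρ0 : ρ ≠ 0) (hρ1 : ρ ≠ 1)
    (M L : Matrix (Fin n) (Fin n) ℝ) : rsd M - ρ • M = L ↔ M = rsdSolution ρ L := by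
  have h1ρ : 1 - ρ ≠ 0 := sub_ne_zero.mpr hρ1.symm
  constructor
  · rintro rfl
    have hrow : (1 - ρ)⁻¹ • ((rsd M - ρ • M) *ᵥ 1) = M *ᵥ 1 := by
      rw [rsd_sub_smul_mulVec_one, smul_smul, inv_mul_cancel₀ h1ρ, one_smul]
    rw [rsdSolution, hrow, ← rsd_eq_diagonal_mulVec_one, sub_sub_cancel, smul_smul,
      inv_mul_cancel₀ hρ0, one_smul]
  · rintro rfl
    rw [rsd_eq_diagonal_mulVec_one, rsdSolution_mulVec_one hρ0 hρ1, rsdSolution, smul_smul,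
      mul_inv_cancel₀ hρ0, one_smul, sub_sub_cancel]

end Matrix

theorem stmt14 {n : ℕ} (ρ : ℝ) (hρ0 : ρ ≠ 0) (hρ1 : ρ ≠ 1)
    (L : Matrix (Fin n) (Fin n) ℝ) (hL : L.IsSymm) :
    ∃! M : Matrix (Fin n) (Fin n) ℝ, M.IsSymm ∧ rsd M - ρ • M = L :=
  ⟨rsdSolution ρ L, ⟨hL.rsdSolution ρ, (rsd_sub_smul_eq_iff hρ0 hρ1 _ _).2 rfl⟩,
    fun _ hM => (rsd_sub_smul_eq_iff hρ0 hρ1 _ _).1 hM.2⟩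
end
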